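/- Let G be a group, α an ordinal, and H ≤ G a subgroup with Z_{α+1}(H) = H (i.e. H is (α+1)-hypercentral). Then the envelope E_{α+1}(H) satisfies Z_{α+1}(E_{α+1}(H)) = E_{α+1}(H); moreover E_{α+1}(H) is exactly (α+1)-hypercentral (its degree of hypercentrality is exactly α+1 if H has degree α+1). -/

import Mathlib

open Ordinal

section Defs
variable {G : Type*} [Group G]

attribute [local instance] Classical.propDecidable

/-- The commutator `[x,y] = x⁻¹y⁻¹xy` as in the paper. -/
def pcomm (x y : G) : G := x⁻¹ * y⁻¹ * x * y

/-- Transfinite upper central series of the (sub)set `E` of `G`, viewed inside `G`. -/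
noncomputable def ZSet (E : Set G) (α : Ordinal) : Set G :=
  if α = 0 then {1}
  else if hs : ∃ β < α, α = β + 1 then
    {x | x ∈ E ∧ ∀ g ∈ E, pcomm x g ∈ ZSet E hs.choose}
  else ⋃ (β : Ordinal) (_ : β < α), ZSet E β
termination_by α
decreasing_by all_goals first | assumption | exact hs.choose_spec.1

/-- Transfinite iterated centralizers `C_E^α(H)` of `H` inside the ambient set `E ⊆ G`. -/
noncomputable def CIter (E H : Set G) (α : Ordinal) : Set G :=
  if α = 0 then {1}
  else if hs : ∃ β < α, α = β + 1 then
    {x | x ∈ E ∧ (∀ β < α, ∀ a : G, a ∈ CIter E H β ↔ x * a * x⁻¹ ∈ CIter E H β)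
       ∧ ∀ h ∈ H, pcomm x h ∈ CIter E H hs.choose}
  else ⋃ (β : Ordinal) (_ : β < α), CIter E H β
termination_by α
decreasing_by all_goals first | assumption | exact hs.choose_spec.1

/-- Transfinite envelopes `E_α(H)` of `H ⊆ G`. -/
noncomputable def Env (H : Set G) (α : Ordinal) : Set G :=
  if α = 0 then Set.univ
  else if hs : ∃ β < α, α = β + 1 then
    {g | g ∈ Env H hs.choose ∧
      ∀ c ∈ CIter (Env H hs.choose) H (hs.choose + 1),
        pcomm g c ∈ CIter (Env H hs.choose) H hs.choose}
  else ⋂ (β : Ordinal) (_ : β < α), Env H β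
termination_by α
decreasing_by all_goals first | assumption | exact hs.choose_spec.1

end Defs

open Order

/-!
The envelopes are coherent: every `E_β` is a subgroup containing `H`, and for `γ < β` the
iterated centralizers `C^δ_{E_β}(H)` with `δ ≤ γ + 1` are the traces on `E_β` of those computed
in `E_γ`. Coherence makes `C^ε_{E_γ}(H)` normal in `E_γ` for `ε ≤ γ`, which in turn keeps
`E_{γ+1}` closed under inverses, so everything is proved by one transfinite induction on `β`.

For the theorem, `Z_{α+1}(H) = H` puts `H`, and then all of `E_{α+1}`, inside
`C^{α+1}_{E_α}(H)`, so commutators of elements of `E_{α+1}` lie in `C^α_{E_α}(H)`; and by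
coherence `C^δ_{E_α}(H) ⊆ Z_δ(E_{α+1})` for `δ ≤ α`. Exactness holds because
`Z_α(E) ∩ H ⊆ Z_α(H)` whenever `H ≤ E`.
-/

theorem Ordinal.eq_zero_or_eq_add_one_or_isSuccLimit (o : Ordinal) :
    o = 0 ∨ (∃ η, o = η + 1) ∨ IsSuccLimit o := by
  obtain h | ⟨η, rfl⟩ | h := zero_or_succ_or_isSuccLimit o
  · exact Or.inl h
  · exact Or.inr (Or.inl ⟨η, succ_eq_add_one η⟩)
  · exact Or.inr (Or.inr h)

@[elab_as_elim]
theorem Ordinal.induction_add_one_limit {p : Ordinal → Prop} (o : Ordinal) (zero : p 0)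
    (add_one : ∀ η, (∀ γ ≤ η, p γ) → p (η + 1))
    (limit : ∀ δ, IsSuccLimit δ → (∀ γ < δ, p γ) → p δ) : p o := by
  induction o using WellFoundedLT.induction with
  | _ δ ih =>
    obtain rfl | ⟨η, rfl⟩ | hδ := δ.eq_zero_or_eq_add_one_or_isSuccLimit
    · exact zero
    · exact add_one η fun γ hγ => ih γ (Order.lt_add_one_iff.mpr hγ)
    · exact limit δ hδ ih

theorem Ordinal.choose_eq_of_exists_eq_add_one {β : Ordinal} (h : ∃ γ < β + 1, β + 1 = γ + 1) :
    h.choose = β :=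
  (by simpa using h.choose_spec.2 : β = h.choose).symm

theorem Ordinal.not_exists_eq_add_one {δ : Ordinal} (h : IsSuccLimit δ) :
    ¬∃ γ < δ, δ = γ + 1 := by
  rintro ⟨γ, -, rfl⟩
  exact not_isSuccLimit_add_one γ h

section Unfolding

variable {G : Type*} [Group G] {E H : Set G} {x : G} {β δ : Ordinal}

theorem mem_ZSet_zero : x ∈ ZSet E 0 ↔ x = 1 := by
  rw [ZSet]; simp

theorem mem_ZSet_add_one : x ∈ ZSet E (β + 1) ↔ x ∈ E ∧ ∀ g ∈ E, pcomm x g ∈ ZSet E β := by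
  rw [ZSet, if_neg (by simp : β + 1 ≠ 0), dif_pos ⟨β, lt_add_one β, rfl⟩,
    choose_eq_of_exists_eq_add_one]
  rfl

theorem mem_ZSet_of_isSuccLimit (h : IsSuccLimit δ) : x ∈ ZSet E δ ↔ ∃ γ < δ, x ∈ ZSet E γ := by
  rw [ZSet, if_neg h.ne_zero, dif_neg (not_exists_eq_add_one h)]; simp

theorem CIter_zero : CIter E H 0 = {1} := by
  rw [CIter]; simp

theorem mem_CIter_zero : x ∈ CIter E H 0 ↔ x = 1 := by
  rw [CIter_zero, Set.mem_singleton_iff]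

theorem mem_CIter_add_one : x ∈ CIter E H (β + 1) ↔ x ∈ E ∧
    (∀ ε ≤ β, x ∈ Subgroup.normalizer (CIter E H ε)) ∧ ∀ h ∈ H, pcomm x h ∈ CIter E H β := by
  rw [CIter, if_neg (by simp : β + 1 ≠ 0), dif_pos ⟨β, lt_add_one β, rfl⟩,
    choose_eq_of_exists_eq_add_one]
  simp only [Set.mem_ofPred_eq, Order.lt_add_one_iff]
  rfl

theorem mem_CIter_of_isSuccLimit (h : IsSuccLimit δ) :
    x ∈ CIter E H δ ↔ ∃ γ < δ, x ∈ CIter E H γ := by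
  rw [CIter, if_neg h.ne_zero, dif_neg (not_exists_eq_add_one h)]; simp

theorem Env_zero : Env H 0 = Set.univ := by
  rw [Env]; simp

theorem mem_Env_add_one : x ∈ Env H (β + 1) ↔ x ∈ Env H β ∧
    ∀ c ∈ CIter (Env H β) H (β + 1), pcomm x c ∈ CIter (Env H β) H β := by
  rw [Env, if_neg (by simp : β + 1 ≠ 0), dif_pos ⟨β, lt_add_one β, rfl⟩,
    choose_eq_of_exists_eq_add_one]
  rfl

theorem mem_Env_of_isSuccLimit (h : IsSuccLimit δ) : x ∈ Env H δ ↔ ∀ γ < δ, x ∈ Env H γ := by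
  rw [Env, if_neg h.ne_zero, dif_neg (not_exists_eq_add_one h)]; simp

end Unfolding

section Commutator

variable {G : Type*} [Group G] (x y c : G)

@[simp]
theorem pcomm_one_left : pcomm 1 y = 1 := by simp [pcomm]

theorem pcomm_inv : (pcomm x y)⁻¹ = pcomm y x := by simp only [pcomm]; group

theorem pcomm_mul_left : pcomm (x * y) c = y⁻¹ * pcomm x c * y * pcomm y c := by
  simp only [pcomm]; group

theorem pcomm_inv_left : pcomm x⁻¹ c = x * (pcomm x c)⁻¹ * x⁻¹ := by simp only [pcomm]; group

theorem conj_eq_mul_inv_pcomm_inv : x * c * x⁻¹ = c * (pcomm x⁻¹ c)⁻¹ := by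
  simp only [pcomm]; group

theorem pcomm_eq_inv_mul_conj : pcomm x c = x⁻¹ * (c⁻¹ * x * c) := by simp only [pcomm]; group

end Commutator

structure IsSubgroupSet {G : Type*} [Group G] (S : Set G) : Prop where
  one_mem : (1 : G) ∈ S
  mul_mem {x y : G} : x ∈ S → y ∈ S → x * y ∈ S
  inv_mem {x : G} : x ∈ S → x⁻¹ ∈ S

theorem Subgroup.isSubgroupSet {G : Type*} [Group G] (K : Subgroup G) :
    IsSubgroupSet (K : Set G) :=
  ⟨K.one_mem, K.mul_mem, K.inv_mem⟩

theorem Subgroup.mem_normalizer_inter {G : Type*} [Group G] {A B : Set G} {x : G}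
    (hA : x ∈ normalizer A) (hB : x ∈ normalizer B) : x ∈ normalizer (A ∩ B) :=
  fun u => and_congr (hA u) (hB u)

namespace IsSubgroupSet

variable {G : Type*} [Group G] {S T : Set G} {x y : G}

theorem pcomm_mem (hS : IsSubgroupSet S) (hx : x ∈ S) (hy : y ∈ S) : pcomm x y ∈ S :=
  hS.mul_mem (hS.mul_mem (hS.mul_mem (hS.inv_mem hx) (hS.inv_mem hy)) hx) hy

theorem subset_normalizer_of_conj_mem (hS : IsSubgroupSet S)
    (h : ∀ x ∈ S, ∀ u ∈ T, x * u * x⁻¹ ∈ T) : S ⊆ Subgroup.normalizer T := by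
  intro x hx u
  refine ⟨h x hx u, fun hu => ?_⟩
  simpa [mul_assoc] using h x⁻¹ (hS.inv_mem hx) _ hu

theorem subset_normalizer (hS : IsSubgroupSet S) : S ⊆ Subgroup.normalizer S :=
  hS.subset_normalizer_of_conj_mem fun _ hx _ hu => hS.mul_mem (hS.mul_mem hx hu) (hS.inv_mem hx)

theorem setOf_pcomm_mem (hS : IsSubgroupSet S) (hT : IsSubgroupSet T)
    (hST : S ⊆ Subgroup.normalizer T) (C : Set G) :
    IsSubgroupSet {g | g ∈ S ∧ ∀ c ∈ C, pcomm g c ∈ T} where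
  one_mem := ⟨hS.one_mem, fun c _ => by simpa using hT.one_mem⟩
  mul_mem := by
    rintro x y ⟨hx, hxC⟩ ⟨hy, hyC⟩
    refine ⟨hS.mul_mem hx hy, fun c hc => ?_⟩
    rw [pcomm_mul_left]
    exact hT.mul_mem ((Subgroup.mem_set_normalizer_iff''.mp (hST hy) _).mp (hxC c hc)) (hyC c hc)
  inv_mem := by
    rintro x ⟨hx, hxC⟩
    refine ⟨hS.inv_mem hx, fun c hc => ?_⟩
    rw [pcomm_inv_left]
    exact (Subgroup.mem_set_normalizer_iff.mp (hST hx) _).mp (hT.inv_mem (hxC c hc))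

end IsSubgroupSet

section CIter

variable {G : Type*} [Group G] {E H : Set G} {x h : G} {δ : Ordinal}

theorem CIter_subset (hE : (1 : G) ∈ E) (δ : Ordinal) : CIter E H δ ⊆ E := by
  induction δ using Ordinal.induction_add_one_limit with
  | zero => intro x hx; rw [mem_CIter_zero.mp hx]; exact hE
  | add_one η _ => exact fun x hx => (mem_CIter_add_one.mp hx).1
  | limit δ hδ ih =>
    intro x hx
    obtain ⟨γ, hγ, hx⟩ := (mem_CIter_of_isSuccLimit hδ).mp hx
    exact ih γ hγ hx

theorem isSubgroupSet_CIter_zero : IsSubgroupSet (CIter E H 0) := by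
  rw [CIter_zero, ← Subgroup.coe_bot]; exact Subgroup.isSubgroupSet ⊥

theorem isSubgroupSet_CIter_add_one (hE : IsSubgroupSet E) {η : Ordinal}
    (hη : IsSubgroupSet (CIter E H η)) : IsSubgroupSet (CIter E H (η + 1)) := by
  have hN : IsSubgroupSet {x | x ∈ E ∧ ∀ ε ≤ η, x ∈ Subgroup.normalizer (CIter E H ε)} :=
    ⟨⟨hE.one_mem, fun _ _ => one_mem _⟩,
      fun ⟨hx, hxN⟩ ⟨hy, hyN⟩ => ⟨hE.mul_mem hx hy, fun ε hε => mul_mem (hxN ε hε) (hyN ε hε)⟩,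
      fun ⟨hx, hxN⟩ => ⟨hE.inv_mem hx, fun ε hε => inv_mem (hxN ε hε)⟩⟩
  convert hN.setOf_pcomm_mem hη (fun x hx => hx.2 η le_rfl) H using 1
  ext x
  simp only [mem_CIter_add_one, Set.mem_ofPred_eq, and_assoc]

theorem isSubgroupSet_CIter_of_isSuccLimit (hδ : IsSuccLimit δ)
    (hmono : ∀ b < δ, ∀ a ≤ b, CIter E H a ⊆ CIter E H b)
    (hC : ∀ γ < δ, IsSubgroupSet (CIter E H γ)) : IsSubgroupSet (CIter E H δ) := by
  constructor <;> simp only [mem_CIter_of_isSuccLimit hδ]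
  · exact ⟨0, hδ.pos, (hC 0 hδ.pos).one_mem⟩
  · rintro x y ⟨a, ha, hx⟩ ⟨b, hb, hy⟩
    have hab := max_lt ha hb
    exact ⟨_, hab, (hC _ hab).mul_mem (hmono _ hab a (le_max_left a b) hx)
      (hmono _ hab b (le_max_right a b) hy)⟩
  · rintro x ⟨a, ha, hx⟩
    exact ⟨a, ha, (hC a ha).inv_mem hx⟩

theorem mem_normalizer_CIter_of_mem (hmono : ∀ b < δ, ∀ a ≤ b, CIter E H a ⊆ CIter E H b)
    (hx : x ∈ CIter E H δ) {ε : Ordinal} (hε : ε < δ) :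
    x ∈ Subgroup.normalizer (CIter E H ε) := by
  obtain rfl | ⟨η, rfl⟩ | hδ := δ.eq_zero_or_eq_add_one_or_isSuccLimit
  · simp at hε
  · exact (mem_CIter_add_one.mp hx).2.1 ε (Order.lt_add_one_iff.mp hε)
  · obtain ⟨θ, hθ, hxθ⟩ := (mem_CIter_of_isSuccLimit hδ).mp hx
    have hlt : max θ ε + 1 < δ := hδ.add_one_lt (max_lt hθ hε)
    have hx' : x ∈ CIter E H (max θ ε + 1) :=
      hmono _ hlt θ ((le_max_left θ ε).trans (lt_add_one _).le) hxθ
    exact (mem_CIter_add_one.mp hx').2.1 ε (le_max_right θ ε)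

theorem pcomm_mem_CIter (hmono : ∀ b ≤ δ, ∀ a ≤ b, CIter E H a ⊆ CIter E H b)
    (hx : x ∈ CIter E H δ) (hh : h ∈ H) : pcomm x h ∈ CIter E H δ := by
  obtain rfl | ⟨η, rfl⟩ | hδ := δ.eq_zero_or_eq_add_one_or_isSuccLimit
  · rw [mem_CIter_zero] at hx ⊢; rw [hx, pcomm_one_left]
  · exact hmono _ le_rfl η (lt_add_one η).le ((mem_CIter_add_one.mp hx).2.2 h hh)
  · obtain ⟨θ, hθ, hxθ⟩ := (mem_CIter_of_isSuccLimit hδ).mp hx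
    have hx' : x ∈ CIter E H (θ + 1) :=
      hmono (θ + 1) (hδ.add_one_lt hθ).le θ (lt_add_one θ).le hxθ
    exact (mem_CIter_of_isSuccLimit hδ).mpr ⟨θ, hθ, (mem_CIter_add_one.mp hx').2.2 h hh⟩

theorem CIter_subset_CIter_add_one (hE : IsSubgroupSet E)
    (hmono : ∀ b ≤ δ, ∀ a ≤ b, CIter E H a ⊆ CIter E H b) (hC : IsSubgroupSet (CIter E H δ)) :
    CIter E H δ ⊆ CIter E H (δ + 1) := by
  intro x hx
  refine mem_CIter_add_one.mpr ⟨CIter_subset hE.one_mem δ hx, fun ε hε => ?_,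
    fun h hh => pcomm_mem_CIter hmono hx hh⟩
  obtain hlt | rfl := hε.lt_or_eq
  · exact mem_normalizer_CIter_of_mem (fun b hb => hmono b hb.le) hx hlt
  · exact hC.subset_normalizer hx

theorem isSubgroupSet_CIter_and_CIter_mono (hE : IsSubgroupSet E) (δ : Ordinal) :
    IsSubgroupSet (CIter E H δ) ∧ ∀ γ ≤ δ, CIter E H γ ⊆ CIter E H δ := by
  induction δ using Ordinal.induction_add_one_limit with
  | zero => exact ⟨isSubgroupSet_CIter_zero, fun γ hγ => by rw [nonpos_iff_eq_zero.mp hγ]⟩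
  | add_one η ih =>
    have hsucc := CIter_subset_CIter_add_one hE (fun b hb => (ih b hb).2) (ih η le_rfl).1
    refine ⟨isSubgroupSet_CIter_add_one hE (ih η le_rfl).1, fun γ hγ => ?_⟩
    obtain hlt | rfl := hγ.lt_or_eq
    · exact ((ih η le_rfl).2 γ (Order.lt_add_one_iff.mp hlt)).trans hsucc
    · rfl
  | limit δ hδ ih =>
    refine ⟨isSubgroupSet_CIter_of_isSuccLimit hδ (fun b hb => (ih b hb).2)
      (fun γ hγ => (ih γ hγ).1), fun γ hγ => ?_⟩
    obtain hlt | rfl := hγ.lt_or_eq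
    · exact fun x hx => (mem_CIter_of_isSuccLimit hδ).mpr ⟨γ, hlt, hx⟩
    · rfl

theorem isSubgroupSet_CIter (hE : IsSubgroupSet E) (δ : Ordinal) : IsSubgroupSet (CIter E H δ) :=
  (isSubgroupSet_CIter_and_CIter_mono hE δ).1

theorem CIter_mono (hE : IsSubgroupSet E) {γ : Ordinal} (h : γ ≤ δ) :
    CIter E H γ ⊆ CIter E H δ :=
  (isSubgroupSet_CIter_and_CIter_mono hE δ).2 γ h

end CIter

section ZSet

variable {G : Type*} [Group G] {E : Set G}

theorem ZSet_subset (hE : (1 : G) ∈ E) (δ : Ordinal) : ZSet E δ ⊆ E := by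
  induction δ using Ordinal.induction_add_one_limit with
  | zero => intro x hx; rw [mem_ZSet_zero.mp hx]; exact hE
  | add_one η _ => exact fun x hx => (mem_ZSet_add_one.mp hx).1
  | limit δ hδ ih =>
    intro x hx
    obtain ⟨γ, hγ, hx⟩ := (mem_ZSet_of_isSuccLimit hδ).mp hx
    exact ih γ hγ hx

theorem ZSet_inter_subset (K : Subgroup G) (hKE : (K : Set G) ⊆ E) (δ : Ordinal) :
    ZSet E δ ∩ K ⊆ ZSet K δ := by
  induction δ using Ordinal.induction_add_one_limit with
  | zero => rintro x ⟨hx, -⟩; exact mem_ZSet_zero.mpr (mem_ZSet_zero.mp hx)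
  | add_one η ih =>
    rintro x ⟨hx, hxK⟩
    exact mem_ZSet_add_one.mpr ⟨hxK, fun g hg =>
      ih η le_rfl ⟨(mem_ZSet_add_one.mp hx).2 g (hKE hg), K.isSubgroupSet.pcomm_mem hxK hg⟩⟩
  | limit δ hδ ih =>
    rintro x ⟨hx, hxK⟩
    obtain ⟨γ, hγ, hx⟩ := (mem_ZSet_of_isSuccLimit hδ).mp hx
    exact (mem_ZSet_of_isSuccLimit hδ).mpr ⟨γ, hγ, ih γ hγ ⟨hx, hxK⟩⟩

theorem ZSet_subset_CIter {H : Set G} (hHE : H ⊆ E) {δ : Ordinal}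
    (hN : ∀ ε < δ, E ⊆ Subgroup.normalizer (CIter E H ε)) : ZSet H δ ⊆ CIter E H δ := by
  induction δ using Ordinal.induction_add_one_limit with
  | zero => intro x hx; exact mem_CIter_zero.mpr (mem_ZSet_zero.mp hx)
  | add_one η ih =>
    intro z hz
    obtain ⟨hzH, hzZ⟩ := mem_ZSet_add_one.mp hz
    refine mem_CIter_add_one.mpr ⟨hHE hzH, fun ε hε => hN ε (Order.lt_add_one_iff.mpr hε) (hHE hzH),
      fun h hh => ih η le_rfl (fun ε hε => hN ε (hε.trans (lt_add_one η))) (hzZ h hh)⟩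
  | limit δ hδ ih =>
    intro x hx
    obtain ⟨γ, hγ, hx⟩ := (mem_ZSet_of_isSuccLimit hδ).mp hx
    exact (mem_CIter_of_isSuccLimit hδ).mpr
      ⟨γ, hγ, ih γ hγ (fun ε hε => hN ε (hε.trans hγ)) hx⟩

end ZSet

theorem CIter_eq_inter {G : Type*} [Group G] {E E' H : Set G} (hE' : IsSubgroupSet E')
    (hE'E : E' ⊆ E) (hH : H ⊆ E') {δ : Ordinal}
    (hN : ∀ ε < δ, E' ⊆ Subgroup.normalizer (CIter E H ε)) :
    CIter E' H δ = CIter E H δ ∩ E' := by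
  induction δ using Ordinal.induction_add_one_limit with
  | zero =>
    rw [CIter_zero, CIter_zero, Set.singleton_inter_of_mem hE'.one_mem]
  | add_one η ih =>
    have ih' : ∀ ε ≤ η, CIter E' H ε = CIter E H ε ∩ E' := fun ε hε =>
      ih ε hε fun ε' hε' => hN ε' ((hε'.trans_le hε).trans (lt_add_one η))
    ext x
    simp only [Set.mem_inter_iff, mem_CIter_add_one]
    constructor
    · rintro ⟨hx, -, hxH⟩
      refine ⟨⟨hE'E hx, fun ε hε => hN ε (Order.lt_add_one_iff.mpr hε) hx, fun h hh => ?_⟩, hx⟩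
      exact (ih' η le_rfl ▸ hxH h hh).1
    · rintro ⟨⟨-, hxN, hxH⟩, hx⟩
      refine ⟨hx, fun ε hε => ?_, fun h hh => ?_⟩
      · rw [ih' ε hε]
        exact Subgroup.mem_normalizer_inter (hxN ε hε) (hE'.subset_normalizer hx)
      · rw [ih' η le_rfl]
        exact ⟨hxH h hh, hE'.pcomm_mem hx (hH hh)⟩
  | limit δ hδ ih =>
    have ih' : ∀ γ < δ, CIter E' H γ = CIter E H γ ∩ E' := fun γ hγ =>
      ih γ hγ fun ε hε => hN ε (hε.trans hγ)
    ext x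
    simp only [Set.mem_inter_iff, mem_CIter_of_isSuccLimit hδ]
    constructor
    · rintro ⟨γ, hγ, hx⟩
      rw [ih' γ hγ] at hx
      exact ⟨⟨γ, hγ, hx.1⟩, hx.2⟩
    · rintro ⟨⟨γ, hγ, hx⟩, hx'⟩
      exact ⟨γ, hγ, (ih' γ hγ).symm ▸ ⟨hx, hx'⟩⟩

section Env

variable {G : Type*} [Group G] {H : Set G}

theorem Env_anti (H : Set G) : Antitone (Env H) := by
  intro γ β h
  induction β using Ordinal.induction_add_one_limit with
  | zero => rw [nonpos_iff_eq_zero.mp h]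
  | add_one ζ ih =>
    obtain hlt | rfl := h.lt_or_eq
    · exact fun x hx => ih ζ le_rfl (Order.lt_add_one_iff.mp hlt) (mem_Env_add_one.mp hx).1
    · rfl
  | limit δ hδ ih =>
    obtain hlt | rfl := h.lt_or_eq
    · exact fun x hx => (mem_Env_of_isSuccLimit hδ).mp hx γ hlt
    · rfl

def CIterCoherent (H : Set G) (β : Ordinal) : Prop :=
  ∀ γ < β, ∀ δ ≤ γ + 1, CIter (Env H β) H δ = CIter (Env H γ) H δ ∩ Env H β

theorem pcomm_mem_CIter_Env {γ η : Ordinal} (hE : IsSubgroupSet (Env H γ))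
    (hcoh : CIterCoherent H γ) (hηγ : η < γ) {g u : G} (hg : g ∈ Env H γ)
    (hu : u ∈ CIter (Env H γ) H (η + 1)) : pcomm g u ∈ CIter (Env H γ) H η := by
  rw [hcoh η hηγ (η + 1) le_rfl] at hu
  rw [hcoh η hηγ η (lt_add_one η).le]
  have hg' : g ∈ Env H (η + 1) := Env_anti H (add_one_le_of_lt hηγ) hg
  exact ⟨(mem_Env_add_one.mp hg').2 u hu.1, hE.pcomm_mem hg hu.2⟩

theorem Env_subset_normalizer_CIter_of_coherent {γ : Ordinal} (hE : IsSubgroupSet (Env H γ))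
    (hcoh : CIterCoherent H γ) {ε : Ordinal} (hε : ε ≤ γ) :
    Env H γ ⊆ Subgroup.normalizer (CIter (Env H γ) H ε) := by
  induction ε using Ordinal.induction_add_one_limit with
  | zero =>
    exact hE.subset_normalizer_of_conj_mem fun x _ u hu => by
      rw [mem_CIter_zero] at hu ⊢; simp [hu]
  | add_one η _ =>
    have hη : η < γ := add_one_le_iff.mp hε
    have hC := isSubgroupSet_CIter (H := H) hE
    refine hE.subset_normalizer_of_conj_mem fun x hx u hu => ?_
    rw [conj_eq_mul_inv_pcomm_inv]
    exact (hC _).mul_mem hu (CIter_mono hE (lt_add_one η).le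
      ((hC η).inv_mem (pcomm_mem_CIter_Env hE hcoh hη (hE.inv_mem hx) hu)))
  | limit δ hδ ih =>
    intro x hx u
    simp only [mem_CIter_of_isSuccLimit hδ]
    exact exists_congr fun θ => and_congr_right fun hθ =>
      Subgroup.mem_set_normalizer_iff.mp (ih θ hθ (hθ.le.trans hε) hx) u

theorem isSubgroupSet_Env_add_one {ζ : Ordinal} (hE : IsSubgroupSet (Env H ζ))
    (hcoh : CIterCoherent H ζ) : IsSubgroupSet (Env H (ζ + 1)) := by
  convert hE.setOf_pcomm_mem (isSubgroupSet_CIter hE ζ)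
    (Env_subset_normalizer_CIter_of_coherent hE hcoh le_rfl) (CIter (Env H ζ) H (ζ + 1)) using 1
  ext
  exact mem_Env_add_one

theorem subset_Env_add_one {ζ : Ordinal} (hE : IsSubgroupSet (Env H ζ)) (hH : H ⊆ Env H ζ) :
    H ⊆ Env H (ζ + 1) := fun h hh =>
  mem_Env_add_one.mpr ⟨hH hh, fun c hc => by
    rw [← pcomm_inv]
    exact (isSubgroupSet_CIter hE ζ).inv_mem ((mem_CIter_add_one.mp hc).2.2 h hh)⟩

theorem cIterCoherent_of_lt {β : Ordinal}
    (ih : ∀ γ < β, IsSubgroupSet (Env H γ) ∧ CIterCoherent H γ)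
    (hE : IsSubgroupSet (Env H β)) (hH : H ⊆ Env H β) : CIterCoherent H β :=
  fun γ hγ _ hδ => CIter_eq_inter hE (Env_anti H hγ.le) hH fun _ hε =>
    (Env_anti H hγ.le).trans <| Env_subset_normalizer_CIter_of_coherent (ih γ hγ).1 (ih γ hγ).2
      (Order.lt_add_one_iff.mp (hε.trans_le hδ))

theorem isSubgroupSet_Env_and_cIterCoherent (H : Set G) (β : Ordinal) :
    IsSubgroupSet (Env H β) ∧ H ⊆ Env H β ∧ CIterCoherent H β := by
  induction β using Ordinal.induction_add_one_limit with
  | zero =>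
    refine ⟨?_, fun _ _ => by rw [Env_zero]; trivial, fun γ hγ => by simp at hγ⟩
    rw [Env_zero, ← Subgroup.coe_top]
    exact Subgroup.isSubgroupSet ⊤
  | add_one ζ ih =>
    obtain ⟨hE, hH, hcoh⟩ := ih ζ le_rfl
    have hE' := isSubgroupSet_Env_add_one hE hcoh
    have hH' := subset_Env_add_one hE hH
    refine ⟨hE', hH', cIterCoherent_of_lt (fun γ hγ => ?_) hE' hH'⟩
    exact ⟨(ih γ (Order.lt_add_one_iff.mp hγ)).1, (ih γ (Order.lt_add_one_iff.mp hγ)).2.2⟩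
  | limit δ hδ ih =>
    have hE : IsSubgroupSet (Env H δ) := by
      constructor <;> simp only [mem_Env_of_isSuccLimit hδ]
      · exact fun γ hγ => (ih γ hγ).1.one_mem
      · exact fun hx hy γ hγ => (ih γ hγ).1.mul_mem (hx γ hγ) (hy γ hγ)
      · exact fun hx γ hγ => (ih γ hγ).1.inv_mem (hx γ hγ)
    have hH : H ⊆ Env H δ := fun h hh =>
      (mem_Env_of_isSuccLimit hδ).mpr fun γ hγ => (ih γ hγ).2.1 hh
    exact ⟨hE, hH, cIterCoherent_of_lt (fun γ hγ => ⟨(ih γ hγ).1, (ih γ hγ).2.2⟩) hE hH⟩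

variable (H) in
theorem isSubgroupSet_Env (β : Ordinal) : IsSubgroupSet (Env H β) :=
  (isSubgroupSet_Env_and_cIterCoherent H β).1

variable (H) in
theorem subset_Env (β : Ordinal) : H ⊆ Env H β :=
  (isSubgroupSet_Env_and_cIterCoherent H β).2.1

variable (H) in
theorem cIterCoherent_Env (β : Ordinal) : CIterCoherent H β :=
  (isSubgroupSet_Env_and_cIterCoherent H β).2.2

theorem Env_subset_normalizer_CIter {γ ε : Ordinal} (hε : ε ≤ γ) :
    Env H γ ⊆ Subgroup.normalizer (CIter (Env H γ) H ε) :=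
  Env_subset_normalizer_CIter_of_coherent (isSubgroupSet_Env H γ) (cIterCoherent_Env H γ) hε

end Env

section Hypercentral

variable {G : Type*} [Group G] {H : Set G} {α : Ordinal}

theorem CIter_Env_subset_Env_add_one : CIter (Env H α) H α ⊆ Env H (α + 1) := by
  intro d hd
  have hE := isSubgroupSet_Env H α
  have hC := isSubgroupSet_CIter (H := H) hE α
  refine mem_Env_add_one.mpr ⟨CIter_subset hE.one_mem α hd, fun c hc => ?_⟩
  have hcN := (mem_CIter_add_one.mp hc).2.1 α le_rfl
  rw [pcomm_eq_inv_mul_conj]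
  exact hC.mul_mem (hC.inv_mem hd) ((Subgroup.mem_set_normalizer_iff''.mp hcN d).mp hd)

theorem CIter_Env_subset_ZSet {δ : Ordinal} (hδ : δ ≤ α) :
    CIter (Env H α) H δ ⊆ ZSet (Env H (α + 1)) δ := by
  have hE := isSubgroupSet_Env H α
  induction δ using Ordinal.induction_add_one_limit with
  | zero => intro x hx; exact mem_ZSet_zero.mpr (mem_CIter_zero.mp hx)
  | add_one η ih =>
    have hη : η < α := add_one_le_iff.mp hδ
    intro x hx
    refine mem_ZSet_add_one.mpr ⟨CIter_Env_subset_Env_add_one (CIter_mono hE hδ hx),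
      fun g hg => ih η le_rfl hη.le ?_⟩
    have hg' : g ∈ Env H α := Env_anti H (lt_add_one α).le hg
    rw [← pcomm_inv]
    exact (isSubgroupSet_CIter hE η).inv_mem
      (pcomm_mem_CIter_Env hE (cIterCoherent_Env H α) hη hg' hx)
  | limit δ hδ' ih =>
    intro x hx
    obtain ⟨γ, hγ, hx⟩ := (mem_CIter_of_isSuccLimit hδ').mp hx
    exact (mem_ZSet_of_isSuccLimit hδ').mpr ⟨γ, hγ, ih γ hγ (hγ.le.trans hδ) hx⟩

theorem Env_add_one_subset_CIter (hH : H ⊆ CIter (Env H α) H (α + 1)) :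
    Env H (α + 1) ⊆ CIter (Env H α) H (α + 1) := fun _ hg =>
  have hgα := (mem_Env_add_one.mp hg).1
  mem_CIter_add_one.mpr ⟨hgα, fun _ hε => Env_subset_normalizer_CIter hε hgα,
    fun h hh => (mem_Env_add_one.mp hg).2 h (hH hh)⟩

end Hypercentral

theorem stmt13 {G : Type*} [Group G] (H : Subgroup G) (α : Ordinal)
    (hH : ZSet (H : Set G) (α + 1) = (H : Set G)) :
    ZSet (Env (H : Set G) (α + 1)) (α + 1) = Env (H : Set G) (α + 1) ∧
      (ZSet (H : Set G) α ≠ (H : Set G) →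
        ZSet (Env (H : Set G) (α + 1)) α ≠ Env (H : Set G) (α + 1)) := by
  have hHC : (H : Set G) ⊆ CIter (Env H α) H (α + 1) :=
    hH.ge.trans <| ZSet_subset_CIter (subset_Env _ α) fun _ hε =>
      Env_subset_normalizer_CIter (Order.lt_add_one_iff.mp hε)
  refine ⟨(Set.Subset.antisymm (fun x hx => (mem_ZSet_add_one.mp hx).1) fun x hx => ?_), ?_⟩
  · refine mem_ZSet_add_one.mpr ⟨hx, fun g hg => CIter_Env_subset_ZSet le_rfl ?_⟩
    exact (mem_Env_add_one.mp hx).2 g (Env_add_one_subset_CIter hHC hg)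
  · intro hne hZ
    refine hne (Set.Subset.antisymm (ZSet_subset H.one_mem α) fun h hh => ?_)
    have hE : h ∈ ZSet (Env H (α + 1)) α := by
      rw [hZ]; exact subset_Env _ (α + 1) hh
    exact ZSet_inter_subset H (subset_Env _ (α + 1)) α ⟨hE, hh⟩
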